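/- Fix ε ∈ (0,1) and δ > 0, and for each n ≥ 2 set r_n = ⌈n^ε⌉ and d_n = ⌈δ · log₂ n⌉ (assuming n is large enough that r_n ≤ n/2). Let L*_n denote the infimum of E[ℓ(c(X^n))] over all adaptive (r_n,d_n,n)-locally decodable source codes c. Then there exist absolute constants C1, C2 > 0 (not depending on ε or δ) such that for all sufficiently large n: C1 · (2^{(1−ε)/δ} − 1) ≤ L*_n / (δ · n^ε · log₂ n) ≤ C2 · 2^{1/δ}. -/

import Mathlib

open Filter MeasureTheory

/-- A binary decision tree: internal nodes probe a (1-indexed) position of the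
codeword, leaves output a bit. -/
inductive DTree : Type
  | leaf (b : Bool) : DTree
  | node (pos : ℕ) (lo hi : DTree) : DTree

namespace DTree

/-- Depth of a decision tree. -/
def depth : DTree → ℕ
  | leaf _ => 0
  | node _ l h => 1 + max l.depth h.depth

/-- All probed positions lie in `{1, …, ℓ}`. -/
def boundedBy (ℓ : ℕ) : DTree → Prop
  | leaf _ => True
  | node p l h => 1 ≤ p ∧ p ≤ ℓ ∧ l.boundedBy ℓ ∧ h.boundedBy ℓ

/-- Evaluate the tree on a codeword `w` (positions are 1-indexed). -/
def eval (w : List Bool) : DTree → Bool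
  | leaf b => b
  | node p l h => if w.getD (p - 1) false then h.eval w else l.eval w

end DTree

/-- `x : Fin n → Bool` has exactly `r` ones. -/
def Sparse (n r : ℕ) (x : Fin n → Bool) : Prop :=
  (Finset.univ.filter fun i => x i = true).card = r

instance (n r : ℕ) : DecidablePred (Sparse n r) := fun _ => Nat.decEq _ r

/-- The type of `r`-sparse binary vectors of length `n`. -/
abbrev SparseVec (n r : ℕ) := {x : Fin n → Bool // Sparse n r x}

/-- An adaptive `(r,d,n)`-locally decodable source code. -/
structure AdaptiveLDC (r d n : ℕ) where
  enc : SparseVec n r → List Bool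
  enc_inj : Function.Injective enc
  tree : Fin n → ℕ → DTree
  depth_le : ∀ j ℓ, (tree j ℓ).depth ≤ d
  bounded : ∀ j ℓ, (tree j ℓ).boundedBy ℓ
  correct : ∀ x (j : Fin n), (tree j (enc x).length).eval (enc x) = x.1 j

/-- Expected codeword length under the uniform distribution on `r`-sparse vectors. -/
noncomputable def expLenA {r d n : ℕ} (c : AdaptiveLDC r d n) : ℝ :=
  (∑ x : SparseVec n r, ((c.enc x).length : ℝ)) / (n.choose r : ℝ)

/-!
Lower bound. Codewords of equal length `ℓ` are distinct, and each is already determined among them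
by its certificate: the at most `r d` position/value pairs read while decoding the ones of `x`.
Hence at most `min (2 ^ ℓ) ((2 ℓ + r d).choose (r d))` vectors have length `ℓ`, and once twice the
number of vectors shorter than `L` stays below `n.choose r ≈ 2 ^ ((1 - ε) r log₂ n)`, the mean length
is at least `L / 2`. With `u = (1 - ε) / δ`, the first count gives `L ≈ (1 - ε) r log₂ n ≈ u r d`,
enough for `u ≤ 8`; the second gives `L ≈ r d 2 ^ u`.

Upper bound. Store the support in a Bloom filter with `2 r d ⌈n ^ (1 / d)⌉` cells and decode `j` as
a one iff all `d` cells hashed from `j` are set. A random hash function has a false positive on a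
fixed support with probability at most `1 / 2`, so among `r (log₂ n + 1)` hash functions every
support has a good one; its index is stored in the codeword length. The length is
`O(r d n ^ (1 / d) + r log₂ n) = O(2 ^ (1 / δ) δ n ^ ε log₂ n)`.
-/

open Finset

namespace DTree

def probes (w : List Bool) : DTree → Finset ℕ
  | leaf _ => ∅
  | node p l h => insert (p - 1) (if w.getD (p - 1) false then h.probes w else l.probes w)

theorem card_probes_le_depth (w : List Bool) (T : DTree) : #(T.probes w) ≤ T.depth := by
  induction T with
  | leaf => simp [probes]
  | node p l h ihl ihh =>
    refine (card_insert_le _ _).trans ?_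
    rw [depth]
    split
    · have := le_max_right l.depth h.depth; omega
    · have := le_max_left l.depth h.depth; omega

theorem lt_of_mem_probes {w : List Bool} {ℓ q : ℕ} {T : DTree} (hT : T.boundedBy ℓ)
    (hq : q ∈ T.probes w) : q < ℓ := by
  induction T with
  | leaf => simp [probes] at hq
  | node p l h ihl ihh =>
    obtain ⟨hp1, hpℓ, hl, hh⟩ := hT
    rw [probes, mem_insert] at hq
    rcases hq with rfl | hq
    · omega
    · split at hq
      exacts [ihh hh hq, ihl hl hq]

theorem eval_eq_of_getD_eq {w w' : List Bool} {T : DTree}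
    (h : ∀ q ∈ T.probes w, w'.getD q false = w.getD q false) : T.eval w' = T.eval w := by
  induction T with
  | leaf => rfl
  | node p l t ihl iht =>
    have hp := h (p - 1) (mem_insert_self _ _)
    have hrest := fun q hq => h q (mem_insert_of_mem hq)
    simp only [eval, hp]
    split <;> simp_all

def allOnes : List ℕ → DTree
  | [] => leaf true
  | p :: ps => node p (leaf false) (allOnes ps)

theorem depth_allOnes (ps : List ℕ) : (allOnes ps).depth = ps.length := by
  induction ps with
  | nil => rfl
  | cons p ps ih => simp [allOnes, depth, ih, Nat.add_comm]

theorem boundedBy_allOnes {ℓ : ℕ} {ps : List ℕ} (h : ∀ p ∈ ps, 1 ≤ p ∧ p ≤ ℓ) :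
    (allOnes ps).boundedBy ℓ := by
  induction ps with
  | nil => trivial
  | cons p ps ih =>
    obtain ⟨h1, hℓ⟩ := h p List.mem_cons_self
    exact ⟨h1, hℓ, trivial, ih fun q hq => h q (List.mem_cons_of_mem p hq)⟩

theorem eval_allOnes (w : List Bool) (ps : List ℕ) :
    (allOnes ps).eval w = decide (∀ p ∈ ps, w.getD (p - 1) false = true) := by
  induction ps with
  | nil => simp [allOnes, eval]
  | cons p ps ih => cases w.getD (p - 1) false <;> simp [allOnes, eval, ih]

end DTree

namespace SparseVec

variable {n r : ℕ}

def support (x : SparseVec n r) : Finset (Fin n) := {j | x.1 j = true}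

theorem card_support (x : SparseVec n r) : #x.support = r := x.2

theorem mem_support {x : SparseVec n r} {j : Fin n} : j ∈ x.support ↔ x.1 j = true := by
  simp [support]

theorem card_eq_choose : Fintype.card (SparseVec n r) = n.choose r := by
  rw [← Fintype.card_fin n, ← Fintype.card_finset_len, Fintype.card_fin]
  exact Fintype.card_congr
    { toFun := fun x => ⟨x.support, x.card_support⟩
      invFun := fun s => ⟨fun j => decide (j ∈ s.1), by simpa [Sparse] using s.2⟩
      left_inv := fun x => by ext j; simp [mem_support]
      right_inv := fun s => by ext j; simp [mem_support] }

end SparseVec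

theorem Finset.card_powerset_filter_card_le_le_choose {α : Type*} [DecidableEq α]
    (s : Finset α) (m : ℕ) : #{t ∈ s.powerset | #t ≤ m} ≤ (#s + m).choose m := by
  have hsplit : {t ∈ s.powerset | #t ≤ m} = (range (m + 1)).biUnion (s.powersetCard ·) := by
    ext t
    simp only [mem_filter, mem_powerset, mem_biUnion, mem_range, mem_powersetCard]
    exact ⟨fun ⟨hts, ht⟩ => ⟨#t, by omega, hts, rfl⟩, fun ⟨i, hi, hts, ht⟩ => ⟨hts, by omega⟩⟩
  -- Vandermonde: `(#s + m).choose m = ∑ i ≤ m, (#s).choose i * m.choose (m - i)`.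
  have hvandermonde : ∑ i ∈ range (m + 1), (#s).choose i ≤ (#s + m).choose m := by
    rw [Nat.add_choose_eq, Finset.Nat.sum_antidiagonal_eq_sum_range_succ_mk]
    exact sum_le_sum fun i hi =>
      Nat.le_mul_of_pos_right _ (Nat.choose_pos (Nat.sub_le m i))
  calc #{t ∈ s.powerset | #t ≤ m}
      ≤ ∑ i ∈ range (m + 1), #(s.powersetCard i) := hsplit ▸ card_biUnion_le
    _ ≤ (#s + m).choose m := by simpa only [card_powersetCard] using hvandermonde

/-- At least half of the points have `L ≤ f x`. -/
theorem Fintype.card_mul_le_two_mul_sum_of_card_fiber_le {α : Type*} [Fintype α] (f : α → ℕ)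
    (cap : ℕ → ℕ) (L : ℕ) (hcap : ∀ ℓ, #{x | f x = ℓ} ≤ cap ℓ)
    (hsum : 2 * ∑ ℓ ∈ range L, cap ℓ ≤ Fintype.card α) :
    Fintype.card α * L ≤ 2 * ∑ x, f x := by
  classical
  have hshort : #{x | f x < L} ≤ ∑ ℓ ∈ range L, cap ℓ := by
    have hsub : ({x | f x < L} : Finset α) ⊆ (range L).biUnion fun ℓ => {x | f x = ℓ} := by
      intro x hx
      simpa using hx
    exact (card_le_card hsub).trans (card_biUnion_le.trans (sum_le_sum fun ℓ _ => hcap ℓ))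
  have hlong : #{x | ¬ f x < L} * L ≤ ∑ x, f x :=
    calc #{x | ¬ f x < L} * L = ∑ _x ∈ {x | ¬ f x < L}, L := by rw [sum_const, smul_eq_mul]
      _ ≤ ∑ x ∈ {x | ¬ f x < L}, f x := sum_le_sum fun x hx => not_lt.1 (mem_filter.1 hx).2
      _ ≤ ∑ x, f x := sum_le_sum_of_subset (subset_univ _)
  have hsplit := card_filter_add_card_filter_not (s := univ) fun x => f x < L
  rw [card_univ] at hsplit
  nlinarith

theorem Nat.cast_choose_mul_le_pow (a m : ℕ) : (((a * m).choose m : ℕ) : ℝ) ≤ (3 * a) ^ m := by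
  have hexp : Real.exp m ≤ 3 ^ m := by
    rw [← Real.exp_one_pow]
    gcongr
    exact (Real.exp_one_lt_d9).le.trans (by norm_num)
  calc (((a * m).choose m : ℕ) : ℝ) ≤ ((a * m : ℕ) : ℝ) ^ m / m.factorial :=
        Nat.choose_le_pow_div m (a * m)
    _ = a ^ m * ((m : ℝ) ^ m / m.factorial) := by push_cast; ring
    _ ≤ a ^ m * 3 ^ m := by
        gcongr
        exact (Real.pow_div_factorial_le_exp _ (Nat.cast_nonneg m) m).trans hexp
    _ = (3 * a) ^ m := by ring

theorem Real.two_rpow_sub_one_le_mul {u : ℝ} (hu : 0 ≤ u) : 2 ^ u - 1 ≤ u * 2 ^ u := by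
  have hlog : Real.log 2 ≤ 1 := (Real.log_two_lt_d9).le.trans (by norm_num)
  have h1 : 1 - u ≤ Real.exp (-(u * Real.log 2)) :=
    (by nlinarith : 1 - u ≤ 1 - u * Real.log 2).trans (Real.one_sub_le_exp_neg _)
  have h2 : Real.exp (-(u * Real.log 2)) * 2 ^ u = 1 := by
    rw [Real.rpow_def_of_pos two_pos, ← Real.exp_add]
    ring_nf
    exact Real.exp_zero
  nlinarith [Real.rpow_pos_of_pos two_pos u]

theorem two_mul_mul_choose_le_pow (m K : ℕ) (hK : 1 ≤ K) :
    (2 * (m * K) * (2 * (m * K) + m).choose m : ℝ) ≤ 2 ^ m * (9 * K) ^ (m + 1) := by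
  have hchoose : ((2 * (m * K) + m).choose m : ℝ) ≤ (9 * K) ^ m := by
    have h := Nat.cast_choose_mul_le_pow (2 * K + 1) m
    have hK' : (1 : ℝ) ≤ K := by exact_mod_cast hK
    rw [show (2 * K + 1) * m = 2 * (m * K) + m by ring] at h
    exact h.trans (pow_le_pow_left₀ (by positivity) (by push_cast; linarith) m)
  have hm : (2 * m : ℝ) ≤ 9 * 2 ^ m := by
    have := Nat.lt_two_pow_self (n := m)
    have : (m : ℝ) ≤ 2 ^ m := by exact_mod_cast this.le
    linarith
  calc (2 * (m * K) * (2 * (m * K) + m).choose m : ℝ)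
      ≤ 2 * (m * K) * (9 * K) ^ m := by gcongr
    _ = 2 * m * (K * (9 * K) ^ m) := by ring
    _ ≤ (9 * 2 ^ m) * (K * (9 * K) ^ m) := by gcongr
    _ = 2 ^ m * (9 * K) ^ (m + 1) := by ring

theorem two_mul_mul_choose_le_two_rpow {u s : ℝ} {r d K : ℕ} (hu : 2 ≤ u) (hus : u ≤ s)
    (hr : 1 ≤ r) (hds : d ≤ s + 1) (hK : 1 ≤ K) (h9K : 9 * (K : ℝ) ≤ 2 ^ (u - 3)) :
    (2 * (r * d * K) * (2 * (r * d * K) + r * d).choose (r * d) : ℝ)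
      ≤ 2 ^ ((u * s - 2) * r) := by
  have hexponent : (r * d : ℕ) + (u - 3) * ((r * d : ℕ) + 1) ≤ (u * s - 2) * r := by
    have hr' : (1 : ℝ) ≤ r := by exact_mod_cast hr
    have : (r : ℝ) * d ≤ r * (s + 1) := by gcongr
    push_cast
    nlinarith
  calc (2 * (r * d * K) * (2 * (r * d * K) + r * d).choose (r * d) : ℝ)
      ≤ 2 ^ (r * d) * (9 * K) ^ (r * d + 1) := mod_cast two_mul_mul_choose_le_pow (r * d) K hK
    _ ≤ 2 ^ (r * d) * (2 ^ (u - 3)) ^ (r * d + 1) := by gcongr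
    _ = 2 ^ ((r * d : ℕ) + (u - 3) * ((r * d : ℕ) + 1)) := by
      rw [Real.rpow_add two_pos, Real.rpow_mul zero_le_two, ← Real.rpow_natCast,
        ← Real.rpow_natCast (2 ^ (u - 3))]
      push_cast
      ring_nf
    _ ≤ 2 ^ ((u * s - 2) * r) := Real.rpow_le_rpow_of_exponent_le one_le_two hexponent

theorem Nat.cast_div_two_mul_pow_le_choose {n r : ℕ} (h : 2 * r ≤ n) :
    ((n : ℝ) / (2 * r)) ^ r ≤ n.choose r := by
  have hhalf : (n : ℝ) / 2 ≤ ((n + 1 - r : ℕ) : ℝ) := by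
    rw [Nat.cast_sub (by omega)]
    push_cast
    have : (2 * r : ℝ) ≤ n := by exact_mod_cast h
    linarith
  have hfact : (r.factorial : ℝ) ≤ (r : ℝ) ^ r := by exact_mod_cast Nat.factorial_le_pow r
  calc ((n : ℝ) / (2 * r)) ^ r = ((n : ℝ) / 2) ^ r / (r : ℝ) ^ r := by
        rw [← div_div, div_pow]
    _ ≤ ((n + 1 - r : ℕ) : ℝ) ^ r / r.factorial := by gcongr
    _ ≤ n.choose r := Nat.pow_le_choose r n

theorem Real.le_two_mul_two_rpow (x : ℝ) : x ≤ 2 * 2 ^ x := by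
  have hexp : x * Real.log 2 + 1 ≤ 2 ^ x := by
    rw [Real.rpow_def_of_pos two_pos, mul_comm]
    exact Real.add_one_le_exp _
  rcases le_or_gt x 0 with hx | hx
  · linarith [Real.rpow_pos_of_pos two_pos x]
  · nlinarith [Real.log_two_gt_d9]

theorem Nat.choose_lt_two_pow_mul_log {n r : ℕ} (hr : r ≠ 0) :
    n.choose r < 2 ^ (r * (Nat.log 2 n + 1)) :=
  calc n.choose r ≤ n ^ r := Nat.choose_le_pow n r
    _ < (2 ^ (Nat.log 2 n + 1)) ^ r :=
        Nat.pow_lt_pow_left (Nat.lt_pow_succ_log_self one_lt_two n) hr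
    _ = 2 ^ (r * (Nat.log 2 n + 1)) := by rw [← pow_mul, mul_comm]

theorem le_ceil_rpow_inv_pow (n : ℕ) {d : ℕ} (hd : d ≠ 0) :
    n ≤ ⌈(n : ℝ) ^ (d : ℝ)⁻¹⌉₊ ^ d := by
  have h : (n : ℝ) ≤ (⌈(n : ℝ) ^ (d : ℝ)⁻¹⌉₊ : ℝ) ^ d :=
    calc (n : ℝ) = ((n : ℝ) ^ (d : ℝ)⁻¹) ^ d := by
          rw [← Real.rpow_natCast, ← Real.rpow_mul n.cast_nonneg, inv_mul_cancel₀ (by simpa),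
            Real.rpow_one]
      _ ≤ (⌈(n : ℝ) ^ (d : ℝ)⁻¹⌉₊ : ℝ) ^ d := by gcongr; exact Nat.le_ceil _
  exact_mod_cast h

/-- With `m = 2 a ⌈n ^ (1 / d)⌉` cells, `n (a / m) ^ d ≤ 1 / 2`: a Bloom filter with `a = r d`
set cells has a false positive with probability at most `1 / 2`. -/
theorem two_mul_mul_pow_le_mul_ceil_rpow_inv_pow (n a : ℕ) {d : ℕ} (hd : d ≠ 0) :
    2 * n * a ^ d ≤ (2 * a * ⌈(n : ℝ) ^ (d : ℝ)⁻¹⌉₊) ^ d := by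
  have h2 : 2 ≤ 2 ^ d := Nat.le_self_pow hd 2
  have := le_ceil_rpow_inv_pow n hd
  calc 2 * n * a ^ d ≤ 2 ^ d * ⌈(n : ℝ) ^ (d : ℝ)⁻¹⌉₊ ^ d * a ^ d := by gcongr
    _ = (2 * a * ⌈(n : ℝ) ^ (d : ℝ)⁻¹⌉₊) ^ d := by ring

namespace AdaptiveLDC

variable {r d n : ℕ} (c : AdaptiveLDC r d n)

def certificate (x : SparseVec n r) : Finset (ℕ × Bool) :=
  x.support.biUnion fun j =>
    ((c.tree j (c.enc x).length).probes (c.enc x)).image fun q => (q, (c.enc x).getD q false)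

theorem getD_of_mem_certificate {x : SparseVec n r} {qb : ℕ × Bool}
    (h : qb ∈ c.certificate x) : (c.enc x).getD qb.1 false = qb.2 := by
  simp only [certificate, mem_biUnion, mem_image] at h
  obtain ⟨j, -, q, -, rfl⟩ := h
  rfl

theorem card_certificate_le (x : SparseVec n r) : #(c.certificate x) ≤ r * d :=
  calc #(c.certificate x)
      ≤ ∑ j ∈ x.support, #((c.tree j (c.enc x).length).probes (c.enc x)) :=
        card_biUnion_le.trans (sum_le_sum fun _ _ => card_image_le)
    _ ≤ ∑ _j ∈ x.support, d :=
        sum_le_sum fun j _ => (DTree.card_probes_le_depth _ _).trans (c.depth_le _ _)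
    _ = r * d := by rw [sum_const, x.card_support, smul_eq_mul]

theorem certificate_subset (x : SparseVec n r) :
    c.certificate x ⊆ range (c.enc x).length ×ˢ univ := by
  intro qb hqb
  simp only [certificate, mem_biUnion, mem_image] at hqb
  obtain ⟨j, -, q, hq, rfl⟩ := hqb
  simpa using DTree.lt_of_mem_probes (c.bounded j _) hq

/-- The certificate records every bit read while decoding a one of `x`, so `y` decodes to one
there as well. -/
theorem eq_of_certificate_eq {x y : SparseVec n r} (hlen : (c.enc x).length = (c.enc y).length)
    (hcert : c.certificate x = c.certificate y) : x = y := by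
  suffices h : ∀ {x y : SparseVec n r}, (c.enc x).length = (c.enc y).length →
      c.certificate x = c.certificate y → ∀ j, x.1 j = true → y.1 j = true from
    Subtype.ext <| funext fun j => Bool.eq_iff_iff.2 ⟨h hlen hcert j, h hlen.symm hcert.symm j⟩
  intro x y hlen hcert j hj
  have hagree : ∀ q ∈ (c.tree j (c.enc x).length).probes (c.enc x),
      (c.enc y).getD q false = (c.enc x).getD q false := by
    intro q hq
    have hmem : (q, (c.enc x).getD q false) ∈ c.certificate y := hcert ▸
      mem_biUnion.2 ⟨j, SparseVec.mem_support.2 hj, mem_image_of_mem _ hq⟩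
    exact c.getD_of_mem_certificate hmem
  rw [← c.correct y j, ← hlen, DTree.eval_eq_of_getD_eq hagree, c.correct x j, hj]

def lengthClass (ℓ : ℕ) : Finset (SparseVec n r) := {x | (c.enc x).length = ℓ}

theorem card_lengthClass_le_two_pow (ℓ : ℕ) : #(c.lengthClass ℓ) ≤ 2 ^ ℓ := by
  let toVector : c.lengthClass ℓ → List.Vector Bool ℓ :=
    fun x => ⟨c.enc x, (mem_filter.1 x.2).2⟩
  have hinj : Function.Injective toVector := fun x y h =>
    Subtype.ext (c.enc_inj (congrArg Subtype.val h))
  simpa using Fintype.card_le_of_injective toVector hinj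

theorem card_lengthClass_le_choose (ℓ : ℕ) :
    #(c.lengthClass ℓ) ≤ (2 * ℓ + r * d).choose (r * d) := by
  classical
  have hmaps : ∀ x ∈ c.lengthClass ℓ,
      c.certificate x ∈ {t ∈ (range ℓ ×ˢ (univ : Finset Bool)).powerset | #t ≤ r * d} := by
    intro x hx
    rw [lengthClass, mem_filter] at hx
    simpa [← hx.2] using ⟨c.certificate_subset x, c.card_certificate_le x⟩
  have hinj : Set.InjOn c.certificate (c.lengthClass ℓ) := fun x hx y hy h =>
    c.eq_of_certificate_eq ((mem_filter.1 hx).2.trans (mem_filter.1 hy).2.symm) h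
  refine (card_le_card_of_injOn _ hmaps hinj).trans ?_
  simpa [mul_comm] using
    card_powerset_filter_card_le_le_choose (range ℓ ×ˢ (univ : Finset Bool)) (r * d)

theorem expLenA_nonneg : 0 ≤ expLenA c := by
  unfold expLenA
  positivity

theorem expLenA_le_of_length_le {B : ℕ} (hB : ∀ x, (c.enc x).length ≤ B) :
    expLenA c ≤ B := by
  refine div_le_of_le_mul₀ (by positivity) (by positivity) ?_
  calc ∑ x : SparseVec n r, ((c.enc x).length : ℝ) ≤ ∑ _x : SparseVec n r, (B : ℝ) :=
        sum_le_sum fun x _ => by exact_mod_cast hB x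
    _ = B * n.choose r := by
        rw [sum_const, card_univ, SparseVec.card_eq_choose, nsmul_eq_mul, mul_comm]

theorem le_expLenA_of_card_lengthClass_le (cap : ℕ → ℕ) {L : ℕ}
    (hcap : ∀ ℓ, #(c.lengthClass ℓ) ≤ cap ℓ) (hsum : 2 * ∑ ℓ ∈ range L, cap ℓ ≤ n.choose r)
    (hN : 0 < n.choose r) : (L : ℝ) / 2 ≤ expLenA c := by
  rw [← SparseVec.card_eq_choose] at hsum hN
  have h := Fintype.card_mul_le_two_mul_sum_of_card_fiber_le (fun x => (c.enc x).length) cap L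
    hcap hsum
  rw [expLenA, ← SparseVec.card_eq_choose, div_le_div_iff₀ two_pos (by exact_mod_cast hN)]
  exact_mod_cast (by linarith : L * Fintype.card (SparseVec n r) ≤ (∑ x, (c.enc x).length) * 2)

theorem le_expLenA_of_two_pow_le {L : ℕ} (hL : 2 ^ (L + 1) ≤ n.choose r) :
    (L : ℝ) / 2 ≤ expLenA c := by
  refine c.le_expLenA_of_card_lengthClass_le (2 ^ ·) c.card_lengthClass_le_two_pow ?_
    (lt_of_lt_of_le (by positivity) hL)
  have := Nat.geomSum_lt (s := range L) le_rfl fun k hk => mem_range.1 hk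
  omega

theorem le_expLenA_of_choose_le {L : ℕ} (hN : 0 < n.choose r)
    (hL : 2 * L * (2 * L + r * d).choose (r * d) ≤ n.choose r) : (L : ℝ) / 2 ≤ expLenA c := by
  refine c.le_expLenA_of_card_lengthClass_le _ c.card_lengthClass_le_choose ?_ hN
  calc 2 * ∑ ℓ ∈ range L, (2 * ℓ + r * d).choose (r * d)
      ≤ 2 * ∑ _ℓ ∈ range L, (2 * L + r * d).choose (r * d) := by
        gcongr with ℓ hℓ
        exact (mem_range.1 hℓ).le
    _ ≤ n.choose r := by rwa [sum_const, card_range, smul_eq_mul, ← mul_assoc]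

theorem le_expLenA_of_two_rpow_le {y : ℝ} (hy : 1 ≤ y) (hN : (2 : ℝ) ^ y ≤ n.choose r) :
    (y - 2) / 2 ≤ expLenA c := by
  have hfloor : 1 ≤ ⌊y⌋₊ := Nat.one_le_floor_iff _ |>.2 hy
  have hpow : 2 ^ (⌊y⌋₊ - 1 + 1) ≤ n.choose r := by
    rw [Nat.sub_add_cancel hfloor]
    have : (2 : ℝ) ^ (⌊y⌋₊ : ℝ) ≤ 2 ^ y :=
      Real.rpow_le_rpow_of_exponent_le one_le_two (Nat.floor_le (by linarith))
    exact_mod_cast (Real.rpow_natCast 2 _ ▸ this).trans hN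
  refine le_trans ?_ (c.le_expLenA_of_two_pow_le hpow)
  have := Nat.lt_floor_add_one y
  rw [Nat.cast_sub hfloor]
  push_cast
  linarith

/-- For `u ≤ 8` the target is of order `u * s * A ≈ log₂ (n.choose r)`: the entropy bound. -/
theorem le_expLenA_of_le_eight {u s A : ℝ} (hu₀ : 0 ≤ u) (hu₈ : u ≤ 8) (hus : 8 ≤ u * s)
    (hA : 1 ≤ A) (hAr : A ≤ r) (hN : (2 : ℝ) ^ ((u * s - 2) * r) ≤ n.choose r) :
    (2 ^ u - 1) * (s * A) / 1024 ≤ expLenA c := by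
  have hs : 0 ≤ s := by nlinarith
  have hy : 6 * A ≤ (u * s - 2) * r := by nlinarith
  have hentropy := c.le_expLenA_of_two_rpow_le (by linarith) hN
  have hpow : (2 : ℝ) ^ u ≤ 256 :=
    (Real.rpow_le_rpow_of_exponent_le one_le_two hu₈).trans_eq (by norm_num)
  have hgap : 2 ^ u - 1 ≤ 256 * u :=
    (Real.two_rpow_sub_one_le_mul hu₀).trans (by nlinarith)
  have hsA : 0 ≤ s * A := by positivity
  calc (2 ^ u - 1) * (s * A) / 1024 ≤ 256 * u * (s * A) / 1024 := by gcongr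
    _ ≤ ((u * s - 2) * r - 2) / 2 := by nlinarith
    _ ≤ expLenA c := hentropy

/-- There are too few certificates for the codewords shorter than `r * d * ⌊2 ^ u / 128⌋`. -/
theorem le_expLenA_of_eight_lt {u s A : ℝ} (hu : 8 < u) (hus : u ≤ s) (hA : 1 ≤ A)
    (hAr : A ≤ r) (hsd : s ≤ d) (hds : d ≤ s + 1)
    (hN : (2 : ℝ) ^ ((u * s - 2) * r) ≤ n.choose r) :
    (2 ^ u - 1) * (s * A) / 1024 ≤ expLenA c := by
  have h256 : (256 : ℝ) ≤ 2 ^ u :=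
    (Real.rpow_le_rpow_of_exponent_le one_le_two hu.le).trans_eq' (by norm_num)
  set K := ⌊(2 : ℝ) ^ u / 128⌋₊
  have hK : 1 ≤ K := Nat.one_le_floor_iff _ |>.2 (by linarith)
  have hKup : (K : ℝ) ≤ 2 ^ u / 128 := Nat.floor_le (by positivity)
  have hKlow : 2 ^ u / 256 ≤ (K : ℝ) := by linarith [Nat.lt_floor_add_one ((2 : ℝ) ^ u / 128)]
  have h9K : 9 * (K : ℝ) ≤ 2 ^ (u - 3) := by
    rw [Real.rpow_sub two_pos]
    norm_num
    linarith
  have hr : 1 ≤ r := by exact_mod_cast hA.trans hAr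
  have hd : 1 ≤ d := by exact_mod_cast (show (1 : ℝ) ≤ d by linarith)
  have hcount : 2 * (r * d * K) * (2 * (r * d * K) + r * d).choose (r * d) ≤ n.choose r := by
    exact_mod_cast (two_mul_mul_choose_le_two_rpow (by linarith) hus hr hds hK h9K).trans hN
  have hNpos : 0 < n.choose r :=
    lt_of_lt_of_le (Nat.mul_pos (by positivity) (Nat.choose_pos (by omega))) hcount
  have hsA : s * A ≤ r * d := by nlinarith
  have hsA₀ : 0 ≤ s * A := by nlinarith
  calc (2 ^ u - 1) * (s * A) / 1024 ≤ (s * A) * (2 ^ u / 256) / 2 := by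
        nlinarith [mul_nonneg hsA₀ (Real.rpow_nonneg zero_le_two u)]
    _ ≤ (r * d) * K / 2 := by gcongr
    _ = ((r * d * K : ℕ) : ℝ) / 2 := by push_cast; ring
    _ ≤ expLenA c := c.le_expLenA_of_choose_le hNpos hcount

theorem le_expLenA {u s A : ℝ} (hu : 0 ≤ u) (hus : u ≤ s) (h8 : 8 ≤ u * s) (hA : 1 ≤ A)
    (hAr : A ≤ r) (hsd : s ≤ d) (hds : d ≤ s + 1)
    (hN : (2 : ℝ) ^ ((u * s - 2) * r) ≤ n.choose r) :
    (2 ^ u - 1) * (s * A) / 1024 ≤ expLenA c := by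
  rcases le_or_gt u 8 with hu₈ | hu₈
  · exact c.le_expLenA_of_le_eight hu hu₈ h8 hA hAr hN
  · exact c.le_expLenA_of_eight_lt hu₈ hus hA hAr hsd hds hN

end AdaptiveLDC

section BloomFilter

variable {n t m r : ℕ}

def bloomFilter (h : Fin n → Fin t → Fin m) (S : Finset (Fin n)) : Finset (Fin m) :=
  S.biUnion fun s => univ.image (h s)

def NoFalsePositive (S : Finset (Fin n)) (h : Fin n → Fin t → Fin m) : Prop :=
  ∀ j ∉ S, ∃ i, h j i ∉ bloomFilter h S

theorem mem_bloomFilter_of_mem {h : Fin n → Fin t → Fin m} {S : Finset (Fin n)} {j : Fin n}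
    (hj : j ∈ S) (i : Fin t) : h j i ∈ bloomFilter h S :=
  mem_biUnion.2 ⟨j, hj, mem_image_of_mem _ (mem_univ i)⟩

theorem card_bloomFilter_le (h : Fin n → Fin t → Fin m) (S : Finset (Fin n)) :
    #(bloomFilter h S) ≤ #S * t :=
  calc #(bloomFilter h S) ≤ ∑ s ∈ S, #(univ.image (h s)) := card_biUnion_le
    _ ≤ ∑ _s ∈ S, t := sum_le_sum fun _ _ => card_image_le.trans (by simp)
    _ = #S * t := by rw [sum_const, smul_eq_mul]

theorem bloomFilter_update {h : Fin n → Fin t → Fin m} {S : Finset (Fin n)} {j : Fin n}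
    (hj : j ∉ S) (v : Fin t → Fin m) : bloomFilter (Function.update h j v) S = bloomFilter h S :=
  biUnion_congr rfl fun s hs => by rw [Function.update_of_ne (ne_of_mem_of_not_mem hs hj)]

/-- A false positive at `j ∉ S` has probability at most `(#S * t / m) ^ t`: the filter of `S` does
not depend on the row of `j`, so replacing that row injects the false positives at `j`, times all
rows, into the pairs of a hash function and a row inside its filter. -/
theorem card_falsePositive_mul_le {S : Finset (Fin n)} (hS : #S = r) {j : Fin n} (hj : j ∉ S) :
    Nat.card {h : Fin n → Fin t → Fin m // ∀ i, h j i ∈ bloomFilter h S} * m ^ t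
      ≤ m ^ (n * t) * (r * t) ^ t := by
  let Target := {p : (Fin n → Fin t → Fin m) × (Fin t → Fin m) // ∀ i, p.2 i ∈ bloomFilter p.1 S}
  let φ : {h : Fin n → Fin t → Fin m // ∀ i, h j i ∈ bloomFilter h S} × (Fin t → Fin m) → Target :=
    fun p => ⟨(Function.update p.1.1 j p.2, p.1.1 j), fun i => by
      simpa only [bloomFilter_update hj] using p.1.2 i⟩
  have hφ : Function.Injective φ := by
    intro p q hpq
    have hupdate : Function.update p.1.1 j p.2 = Function.update q.1.1 j q.2 :=
      congrArg (fun z : Target => z.1.1) hpq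
    have hrow : p.1.1 j = q.1.1 j := congrArg (fun z : Target => z.1.2) hpq
    refine Prod.ext (Subtype.ext (funext fun k => ?_)) (by simpa using congrFun hupdate j)
    by_cases hk : k = j
    · exact hk ▸ hrow
    · simpa [Function.update_of_ne hk] using congrFun hupdate k
  have hTarget : Nat.card Target ≤ m ^ (n * t) * (r * t) ^ t := by
    rw [Nat.card_congr (Equiv.subtypeProdEquivSigmaSubtype
      fun (h : Fin n → Fin t → Fin m) (w : Fin t → Fin m) => ∀ i, w i ∈ bloomFilter h S),
      Nat.card_sigma]
    calc ∑ h : Fin n → Fin t → Fin m, Nat.card {w : Fin t → Fin m // ∀ i, w i ∈ bloomFilter h S}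
        = ∑ h : Fin n → Fin t → Fin m, #(bloomFilter h S) ^ t := by
          refine sum_congr rfl fun h _ => ?_
          rw [Nat.card_congr (Equiv.subtypePiEquivPi), Nat.card_pi]
          simp
      _ ≤ ∑ _h : Fin n → Fin t → Fin m, (r * t) ^ t :=
          sum_le_sum fun h _ => Nat.pow_le_pow_left (hS ▸ card_bloomFilter_le h S) t
      _ = m ^ (n * t) * (r * t) ^ t := by simp [← pow_mul, mul_comm]
  have := Nat.card_le_card_of_injective φ hφ
  rw [Nat.card_prod, Nat.card_fun] at this
  simpa using this.trans hTarget

theorem two_mul_card_not_noFalsePositive_le {S : Finset (Fin n)} (hS : #S = r) (hm : 0 < m)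
    (hmt : 2 * n * (r * t) ^ t ≤ m ^ t) :
    2 * Nat.card {h : Fin n → Fin t → Fin m // ¬ NoFalsePositive S h} ≤ m ^ (n * t) := by
  classical
  have hunion : #{h : Fin n → Fin t → Fin m | ¬ NoFalsePositive S h}
      ≤ ∑ j ∈ Sᶜ, #{h : Fin n → Fin t → Fin m | ∀ i, h j i ∈ bloomFilter h S} := by
    refine (card_le_card fun h hh => ?_).trans card_biUnion_le
    simpa [NoFalsePositive] using hh
  have hrow : ∀ j ∈ Sᶜ, #{h : Fin n → Fin t → Fin m | ∀ i, h j i ∈ bloomFilter h S} * m ^ t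
      ≤ m ^ (n * t) * (r * t) ^ t := fun j hj => by
    simpa [Nat.card_eq_fintype_card, Fintype.card_subtype] using
      card_falsePositive_mul_le (m := m) hS (mem_compl.1 hj)
  have hbad : #{h : Fin n → Fin t → Fin m | ¬ NoFalsePositive S h} * m ^ t
      ≤ n * (m ^ (n * t) * (r * t) ^ t) :=
    calc _ ≤ ∑ j ∈ Sᶜ, #{h : Fin n → Fin t → Fin m | ∀ i, h j i ∈ bloomFilter h S} * m ^ t := by
          rw [← sum_mul]; gcongr
      _ ≤ ∑ _j ∈ Sᶜ, m ^ (n * t) * (r * t) ^ t := sum_le_sum hrow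
      _ ≤ n * (m ^ (n * t) * (r * t) ^ t) := by
          rw [sum_const, smul_eq_mul]
          exact Nat.mul_le_mul_right _ ((card_le_univ _).trans_eq (Fintype.card_fin n))
  rw [Nat.card_eq_fintype_card, Fintype.card_subtype]
  refine Nat.le_of_mul_le_mul_right ?_ (pow_pos hm t)
  calc 2 * #{h : Fin n → Fin t → Fin m | ¬ NoFalsePositive S h} * m ^ t
      ≤ 2 * n * (r * t) ^ t * m ^ (n * t) := by nlinarith
    _ ≤ m ^ t * m ^ (n * t) := Nat.mul_le_mul_right _ hmt
    _ = m ^ (n * t) * m ^ t := mul_comm _ _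

/-- The probabilistic method: a uniformly random `g` fails a given `S` with probability at most
`2 ^ (-M)`. -/
theorem exists_forall_exists_of_two_mul_card_le {ι Γ : Type*} [Fintype Γ] [Nonempty Γ]
    (P : ι → Γ → Prop) (𝒮 : Finset ι) {M : ℕ} (h𝒮 : #𝒮 < 2 ^ M)
    (hP : ∀ S ∈ 𝒮, 2 * Nat.card {γ // ¬ P S γ} ≤ Fintype.card Γ) :
    ∃ g : Fin M → Γ, ∀ S ∈ 𝒮, ∃ σ, P S (g σ) := by
  classical
  by_contra! hfail
  have hcover : (univ : Finset (Fin M → Γ))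
      ⊆ 𝒮.biUnion fun S => Fintype.piFinset fun _ => {γ | ¬ P S γ} := fun g _ => by
    obtain ⟨S, hS, hg⟩ := hfail g
    exact mem_biUnion.2 ⟨S, hS, Fintype.mem_piFinset.2 fun σ => by simpa using hg σ⟩
  have hcard : Fintype.card Γ ^ M ≤ ∑ S ∈ 𝒮, #{γ | ¬ P S γ} ^ M := by
    simpa using (card_le_card hcover).trans card_biUnion_le
  have hterm : ∀ S ∈ 𝒮, 2 ^ M * #{γ | ¬ P S γ} ^ M ≤ Fintype.card Γ ^ M := fun S hS => by
    have h := hP S hS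
    rw [Nat.card_eq_fintype_card, Fintype.card_subtype] at h
    rw [← mul_pow]
    exact Nat.pow_le_pow_left h M
  have hle : 2 ^ M * Fintype.card Γ ^ M ≤ #𝒮 * Fintype.card Γ ^ M :=
    calc 2 ^ M * Fintype.card Γ ^ M ≤ ∑ S ∈ 𝒮, 2 ^ M * #{γ | ¬ P S γ} ^ M := by
          rw [← mul_sum]; exact Nat.mul_le_mul_left _ hcard
      _ ≤ ∑ _S ∈ 𝒮, Fintype.card Γ ^ M := sum_le_sum hterm
      _ = #𝒮 * Fintype.card Γ ^ M := by rw [sum_const, smul_eq_mul]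
  exact h𝒮.not_ge (Nat.le_of_mul_le_mul_right hle (pow_pos Fintype.card_pos M))

theorem exists_noFalsePositive_family {M : ℕ} (hm : 0 < m) (hmt : 2 * n * (r * t) ^ t ≤ m ^ t)
    (hM : n.choose r < 2 ^ M) :
    ∃ g : Fin M → Fin n → Fin t → Fin m,
      ∀ S : Finset (Fin n), #S = r → ∃ σ, NoFalsePositive S (g σ) := by
  have : Nonempty (Fin m) := ⟨⟨0, hm⟩⟩
  obtain ⟨g, hg⟩ := exists_forall_exists_of_two_mul_card_le (fun S h => NoFalsePositive S h)
    (univ.powersetCard r) (by simpa using hM) fun S hS => by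
      simpa [← pow_mul, mul_comm] using
        two_mul_card_not_noFalsePositive_le (mem_powersetCard.1 hS).2 hm hmt
  exact ⟨g, fun S hS => hg S (mem_powersetCard.2 ⟨subset_univ S, hS⟩)⟩

end BloomFilter

section BloomCode

variable {n r d m M : ℕ}

/-- The seed `σ` is written in unary after the filter, so the decoders read it off the length. -/
def bloomEncode (g : Fin M → Fin n → Fin d → Fin m) (σ : Fin M) (x : SparseVec n r) :
    List Bool :=
  List.ofFn (fun cell => decide (cell ∈ bloomFilter (g σ) x.support)) ++ List.replicate σ false

def bloomDecoder (g : Fin M → Fin n → Fin d → Fin m) (j : Fin n) (ℓ : ℕ) : DTree :=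
  if h : m ≤ ℓ ∧ ℓ - m < M then
    DTree.allOnes (List.ofFn fun i => (g ⟨ℓ - m, h.2⟩ j i : ℕ) + 1)
  else .leaf false

variable (g : Fin M → Fin n → Fin d → Fin m)

theorem length_bloomEncode (σ : Fin M) (x : SparseVec n r) :
    (bloomEncode g σ x).length = m + σ := by
  simp [bloomEncode]

theorem getD_bloomEncode (σ : Fin M) (x : SparseVec n r) (cell : Fin m) :
    (bloomEncode g σ x).getD cell false = decide (cell ∈ bloomFilter (g σ) x.support) := by
  rw [bloomEncode, List.getD_append _ _ _ _ (by simp), List.getD_eq_getElem _ _ (by simp),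
    List.getElem_ofFn]

theorem eval_bloomDecoder {σ : Fin M} {x : SparseVec n r}
    (hσ : NoFalsePositive x.support (g σ)) (j : Fin n) :
    (bloomDecoder g j (bloomEncode g σ x).length).eval (bloomEncode g σ x) = x.1 j := by
  have hℓ : m ≤ m + σ ∧ m + σ - m < M := by omega
  have hseed : (⟨m + σ - m, hℓ.2⟩ : Fin M) = σ := Fin.ext (by simp)
  rw [bloomDecoder, length_bloomEncode, dif_pos hℓ, hseed, DTree.eval_allOnes]
  simp only [List.mem_ofFn, forall_exists_index, forall_apply_eq_imp_iff, Nat.add_sub_cancel,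
    getD_bloomEncode, decide_eq_true_eq]
  by_cases hj : x.1 j = true
  · simpa [hj] using fun i => mem_bloomFilter_of_mem (SparseVec.mem_support.2 hj) i
  · obtain ⟨i, hi⟩ := hσ j (mt SparseVec.mem_support.1 hj)
    simpa [hj] using ⟨i, hi⟩

theorem depth_bloomDecoder_le (j : Fin n) (ℓ : ℕ) : (bloomDecoder g j ℓ).depth ≤ d := by
  unfold bloomDecoder
  split
  · simp [DTree.depth_allOnes]
  · simp [DTree.depth]

theorem boundedBy_bloomDecoder (j : Fin n) (ℓ : ℕ) : (bloomDecoder g j ℓ).boundedBy ℓ := by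
  unfold bloomDecoder
  split
  · next h =>
    refine DTree.boundedBy_allOnes fun p hp => ?_
    obtain ⟨i, rfl⟩ := List.mem_ofFn.1 hp
    have := (g ⟨ℓ - m, h.2⟩ j i).isLt
    omega
  · trivial

end BloomCode

theorem AdaptiveLDC.exists_expLenA_le {n r d m M : ℕ} (hm : 0 < m)
    (hmd : 2 * n * (r * d) ^ d ≤ m ^ d) (hM : n.choose r < 2 ^ M) :
    ∃ c : AdaptiveLDC r d n, expLenA c ≤ (m + M : ℕ) := by
  obtain ⟨g, hg⟩ := exists_noFalsePositive_family hm hmd hM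
  choose seed hseed using fun x : SparseVec n r => hg x.support x.card_support
  have hcorrect := fun x => eval_bloomDecoder g (hseed x)
  let c : AdaptiveLDC r d n :=
    { enc := fun x => bloomEncode g (seed x) x
      enc_inj := fun x y hxy => Subtype.ext <| funext fun j => by
        rw [← hcorrect x j, ← hcorrect y j]
        simp only at hxy
        rw [hxy]
      tree := bloomDecoder g
      depth_le := depth_bloomDecoder_le g
      bounded := boundedBy_bloomDecoder g
      correct := hcorrect }
  refine ⟨c, c.expLenA_le_of_length_le fun x => ?_⟩
  simp only [c, length_bloomEncode]
  omega

section Parameters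

variable {ε δ : ℝ} {n : ℕ}

theorem one_le_natCast_of_four_le_rpow (hε1 : ε < 1) (h4 : 4 ≤ (n : ℝ) ^ (1 - ε)) :
    (1 : ℝ) ≤ n := by
  rcases Nat.eq_zero_or_pos n with rfl | hn
  · rw [Nat.cast_zero, Real.zero_rpow (by linarith)] at h4
    norm_num at h4
  · exact_mod_cast hn

/-- `n.choose r ≥ (n / 2r) ^ r` and `n / 2r ≥ n ^ (1 - ε) / 4 = 2 ^ ((1 - ε) log₂ n - 2)`. -/
theorem two_rpow_le_choose_ceil_rpow (hε : 0 < ε) (hε1 : ε < 1) (h4 : 4 ≤ (n : ℝ) ^ (1 - ε)) :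
    (2 : ℝ) ^ (((1 - ε) * Real.logb 2 n - 2) * ⌈(n : ℝ) ^ ε⌉₊) ≤ n.choose ⌈(n : ℝ) ^ ε⌉₊ := by
  set r := ⌈(n : ℝ) ^ ε⌉₊
  have hn := one_le_natCast_of_four_le_rpow hε1 h4
  have hA : 1 ≤ (n : ℝ) ^ ε := Real.one_le_rpow hn hε.le
  have hr : (r : ℝ) ≤ 2 * (n : ℝ) ^ ε := Nat.ceil_le_two_mul (by linarith)
  have hr₀ : (0 : ℝ) < r := by linarith [Nat.le_ceil ((n : ℝ) ^ ε)]
  have hsplit : (n : ℝ) ^ (1 - ε) * (n : ℝ) ^ ε = n := by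
    rw [← Real.rpow_add (by linarith)]
    simp
  have h2r : 2 * r ≤ n := by
    have : (2 * r : ℝ) ≤ n := by nlinarith
    exact_mod_cast this
  have hbase : (2 : ℝ) ^ ((1 - ε) * Real.logb 2 n - 2) ≤ n / (2 * r) := by
    rw [Real.rpow_sub two_pos, mul_comm, Real.rpow_mul zero_le_two,
      Real.rpow_logb two_pos (by norm_num) (by linarith), le_div_iff₀ (by positivity)]
    norm_num
    nlinarith
  calc (2 : ℝ) ^ (((1 - ε) * Real.logb 2 n - 2) * r)
      = ((2 : ℝ) ^ ((1 - ε) * Real.logb 2 n - 2)) ^ r := by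
        rw [Real.rpow_mul zero_le_two, Real.rpow_natCast]
    _ ≤ ((n : ℝ) / (2 * r)) ^ r := by gcongr
    _ ≤ n.choose r := Nat.cast_div_two_mul_pow_le_choose h2r

theorem le_expLenA_of_params (hε : 0 < ε) (hε1 : ε < 1) (hδ : 0 < δ)
    (h4 : 4 ≤ (n : ℝ) ^ (1 - ε)) (hu : (1 - ε) / δ ≤ δ * Real.logb 2 n)
    (h8 : 8 ≤ (1 - ε) * Real.logb 2 n)
    (c : AdaptiveLDC ⌈(n : ℝ) ^ ε⌉₊ ⌈δ * Real.logb 2 n⌉₊ n) :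
    (2 ^ ((1 - ε) / δ) - 1) * (δ * (n : ℝ) ^ ε * Real.logb 2 n) / 1024 ≤ expLenA c := by
  have hn := one_le_natCast_of_four_le_rpow hε1 h4
  have hrate : (1 - ε) / δ * (δ * Real.logb 2 n) = (1 - ε) * Real.logb 2 n := by
    field_simp
  have hN := two_rpow_le_choose_ceil_rpow hε hε1 h4
  rw [← hrate] at h8 hN
  have h := c.le_expLenA (div_nonneg (by linarith) hδ.le) hu h8 (Real.one_le_rpow hn hε.le)
    (Nat.le_ceil _) (Nat.le_ceil _) (Nat.ceil_lt_add_one (by nlinarith)).le hN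
  rwa [show δ * Real.logb 2 n * (n : ℝ) ^ ε = δ * (n : ℝ) ^ ε * Real.logb 2 n by ring] at h

theorem ceil_rpow_inv_ceil_mul_logb_le (hδ : 0 < δ) (hn : 1 ≤ (n : ℝ))
    (hδlg : 1 ≤ δ * Real.logb 2 n) :
    (⌈(n : ℝ) ^ ((⌈δ * Real.logb 2 n⌉₊ : ℕ) : ℝ)⁻¹⌉₊ : ℝ) ≤ 2 * 2 ^ (1 / δ) := by
  set d := ⌈δ * Real.logb 2 n⌉₊
  have hd : δ * Real.logb 2 n ≤ d := Nat.le_ceil _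
  have hroot : (n : ℝ) ^ (d : ℝ)⁻¹ ≤ 2 ^ (1 / δ) := by
    rw [← Real.rpow_logb two_pos (by norm_num) (by linarith : (0 : ℝ) < n), ← Real.rpow_mul
      zero_le_two]
    refine Real.rpow_le_rpow_of_exponent_le one_le_two ?_
    rw [← div_eq_mul_inv, div_le_div_iff₀ (by linarith) hδ]
    linarith
  have hP : (1 : ℝ) ≤ 2 ^ (1 / δ) := Real.one_le_rpow one_le_two (by positivity)
  linarith [Nat.ceil_lt_add_one (Real.rpow_nonneg n.cast_nonneg (d : ℝ)⁻¹)]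

theorem exists_expLenA_le_of_params (hε : 0 < ε) (hε1 : ε < 1) (hδ : 0 < δ)
    (h4 : 4 ≤ (n : ℝ) ^ (1 - ε)) (hδlg : 1 ≤ δ * Real.logb 2 n)
    (h8 : 8 ≤ (1 - ε) * Real.logb 2 n) :
    ∃ c : AdaptiveLDC ⌈(n : ℝ) ^ ε⌉₊ ⌈δ * Real.logb 2 n⌉₊ n,
      expLenA c ≤ 24 * 2 ^ (1 / δ) * (δ * (n : ℝ) ^ ε * Real.logb 2 n) := by
  set r := ⌈(n : ℝ) ^ ε⌉₊
  set d := ⌈δ * Real.logb 2 n⌉₊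
  set K := ⌈(n : ℝ) ^ (d : ℝ)⁻¹⌉₊
  have hn := one_le_natCast_of_four_le_rpow hε1 h4
  have hA : 1 ≤ (n : ℝ) ^ ε := Real.one_le_rpow hn hε.le
  have hr : r ≠ 0 := (Nat.ceil_pos.2 (by linarith)).ne'
  have hd : d ≠ 0 := (Nat.ceil_pos.2 (by linarith)).ne'
  obtain ⟨c, hc⟩ := AdaptiveLDC.exists_expLenA_le (by positivity)
    (two_mul_mul_pow_le_mul_ceil_rpow_inv_pow n (r * d) hd)
    (Nat.choose_lt_two_pow_mul_log (n := n) hr)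
  refine ⟨c, hc.trans ?_⟩
  have hrA : (r : ℝ) ≤ 2 * (n : ℝ) ^ ε := Nat.ceil_le_two_mul (by linarith)
  have hds : (d : ℝ) ≤ 2 * (δ * Real.logb 2 n) := Nat.ceil_le_two_mul (by linarith)
  have hK := ceil_rpow_inv_ceil_mul_logb_le hδ hn hδlg
  have hlog : (Nat.log 2 n : ℝ) ≤ Real.logb 2 n := by exact_mod_cast Real.natLog_le_logb n 2
  have hlg : 1 ≤ Real.logb 2 n := by nlinarith
  have hδP : 1 ≤ 2 * 2 ^ (1 / δ) * δ := by
    have := Real.le_two_mul_two_rpow (1 / δ)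
    rwa [div_le_iff₀ hδ] at this
  have hbloom : (2 * (r * d) * K : ℝ)
      ≤ 2 * ((2 * (n : ℝ) ^ ε) * (2 * (δ * Real.logb 2 n))) * (2 * 2 ^ (1 / δ)) := by
    gcongr
  have hseed : (r * (Nat.log 2 n + 1) : ℝ) ≤ (2 * (n : ℝ) ^ ε) * (2 * Real.logb 2 n) := by
    gcongr
    linarith
  have hAlg : 0 ≤ (n : ℝ) ^ ε * Real.logb 2 n := by positivity
  push_cast
  nlinarith [mul_le_mul_of_nonneg_left hδP hAlg]

end Parameters

/-- With `rₙ = ⌈n^ε⌉` and `dₙ = ⌈δ log₂ n⌉`, the optimal expected length `L*ₙ` of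
adaptive `(rₙ,dₙ,n)`-locally decodable codes satisfies
`C₁ (2^{(1−ε)/δ} − 1) ≤ L*ₙ / (δ n^ε log₂ n) ≤ C₂ 2^{1/δ}` for large `n`, where
`C₁, C₂ > 0` are absolute constants not depending on `ε` or `δ`. -/
theorem polynomial_sparsity_scaling :
    ∃ C1 C2 : ℝ, 0 < C1 ∧ 0 < C2 ∧
      ∀ ε δ : ℝ, 0 < ε → ε < 1 → 0 < δ →
        ∀ᶠ n : ℕ in atTop,
          C1 * ((2 : ℝ) ^ ((1 - ε) / δ) - 1) ≤
            sInf {L : ℝ | ∃ c : AdaptiveLDC ⌈(n : ℝ) ^ ε⌉₊ ⌈δ * Real.logb 2 n⌉₊ n,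
                expLenA c = L} /
              (δ * (n : ℝ) ^ ε * Real.logb 2 n) ∧
          sInf {L : ℝ | ∃ c : AdaptiveLDC ⌈(n : ℝ) ^ ε⌉₊ ⌈δ * Real.logb 2 n⌉₊ n,
                expLenA c = L} /
              (δ * (n : ℝ) ^ ε * Real.logb 2 n) ≤
            C2 * (2 : ℝ) ^ (1 / δ) := by
  refine ⟨1 / 1024, 24, by norm_num, by norm_num, fun ε δ hε hε1 hδ => ?_⟩
  have hlog := (Real.tendsto_logb_atTop one_lt_two).comp tendsto_natCast_atTop_atTop
  filter_upwards [((tendsto_rpow_atTop (sub_pos.2 hε1)).comp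
      tendsto_natCast_atTop_atTop).eventually_ge_atTop 4,
    (hlog.const_mul_atTop hδ).eventually_ge_atTop (max 1 ((1 - ε) / δ)),
    (hlog.const_mul_atTop (sub_pos.2 hε1)).eventually_ge_atTop 8] with n h4 hδlg h8
  have hlg : 1 ≤ δ * Real.logb 2 n := (le_max_left _ _).trans hδlg
  have hu : (1 - ε) / δ ≤ δ * Real.logb 2 n := (le_max_right _ _).trans hδlg
  have hD : 0 < δ * (n : ℝ) ^ ε * Real.logb 2 n := by
    have := one_le_natCast_of_four_le_rpow hε1 h4
    rw [mul_right_comm]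
    exact mul_pos (by linarith) (by positivity)
  obtain ⟨c₀, hc₀⟩ := exists_expLenA_le_of_params hε hε1 hδ h4 hlg h8
  refine ⟨(le_div_iff₀ hD).2 (le_csInf ⟨_, c₀, rfl⟩ ?_), (div_le_iff₀ hD).2 ?_⟩
  · rintro _ ⟨c, rfl⟩
    linarith [le_expLenA_of_params hε hε1 hδ h4 hu h8 c]
  · refine le_trans (csInf_le ⟨0, ?_⟩ ⟨c₀, rfl⟩) hc₀
    rintro _ ⟨c, rfl⟩
    exact c.expLenA_nonneg
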